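/- arXiv:2404.06030 — 2 statements merged into one kernel-verified Lean document; each statement's English description precedes it below -/
import Mathlib

section
/- Let x_t, x_{t+1} ∈ ℝ^n have all rows (entries) x_t^i nonzero. If Σ_{i=1}^n ‖x_{t+1}^i‖₂²/(2‖x_t^i‖₂) ≤ Σ_{i=1}^n ‖x_t^i‖₂²/(2‖x_t^i‖₂), then Σ_{i=1}^n ‖x_{t+1}^i‖₂ ≤ Σ_{i=1}^n ‖x_t^i‖₂. -/
theorem stmt_1 {n : ℕ} (xt xt1 : Fin n → ℝ)
    (hx : ∀ i, xt i ≠ 0)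
    (h : ∑ i, |xt1 i| ^ 2 / (2 * |xt i|) ≤ ∑ i, |xt i| ^ 2 / (2 * |xt i|)) :
    ∑ i, |xt1 i| ≤ ∑ i, |xt i| := by
  have key : ∀ i, |xt1 i| - |xt1 i| ^ 2 / (2 * |xt i|) ≤
      |xt i| - |xt i| ^ 2 / (2 * |xt i|) := by
    intro i
    have hv : 0 < |xt i| := abs_pos.mpr (hx i)
    have ha : |xt1 i| ^ 2 / (2 * |xt i|) * (2 * |xt i|) = |xt1 i| ^ 2 :=
      div_mul_cancel₀ _ (by positivity)
    have hb : |xt i| ^ 2 / (2 * |xt i|) * (2 * |xt i|) = |xt i| ^ 2 :=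
      div_mul_cancel₀ _ (by positivity)
    nlinarith [sq_nonneg (|xt1 i| - |xt i|), abs_nonneg (xt1 i)]
  have h2 : ∑ i, (|xt1 i| - |xt1 i| ^ 2 / (2 * |xt i|)) ≤
      ∑ i, (|xt i| - |xt i| ^ 2 / (2 * |xt i|)) :=
    Finset.sum_le_sum fun i _ => key i
  rw [Finset.sum_sub_distrib, Finset.sum_sub_distrib] at h2
  linarith
end

section
/- Let f : D → ℝ be differentiable on a convex set D ⊆ ℝⁿ. Then f is strongly convex with parameter μ > 0 if and only if ⟨∇f(x) − ∇f(y), x − y⟩ ≥ μ‖x − y‖² for all x, y ∈ D. -/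
/-!
Strong convexity with modulus `μ` is convexity of `f - μ / 2 * ‖·‖ ^ 2`, whose gradient is
`f' - μ • id`, so it suffices to show that a function with a gradient on a convex set is convex
iff its gradient is monotone, `0 ≤ ⟪f' x - f' y, x - y⟫`. Both directions are one-dimensional
statements about `f` restricted to a segment: convexity bounds the derivative at an endpoint by
the secant slope, and a monotone derivative makes the restriction convex.
-/

open RealInnerProductSpace Set AffineMap

section NormedSpace

variable {E : Type*} [NormedAddCommGroup E] [NormedSpace ℝ E] {D : Set E} {f : E → ℝ} {μ : ℝ}

theorem strongConvexOn_iff_forall_Icc (hD : Convex ℝ D) :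
    StrongConvexOn D μ f ↔ ∀ x ∈ D, ∀ y ∈ D, ∀ t ∈ Icc (0 : ℝ) 1,
      f (t • x + (1 - t) • y) ≤ t * f x + (1 - t) * f y - μ / 2 * t * (1 - t) * ‖x - y‖ ^ 2 := by
  simp only [StrongConvexOn, UniformConvexOn, hD, true_and, smul_eq_mul]
  constructor
  · intro h x hx y hy t ht
    convert h hx hy ht.1 (sub_nonneg.2 ht.2) (add_sub_cancel t 1) using 1
    ring
  · intro h x hx y hy a b ha hb hab
    obtain rfl : b = 1 - a := by linarith
    convert h x hx y hy a ⟨ha, by linarith⟩ using 1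
    ring

end NormedSpace

section InnerProductSpace

variable {E : Type*} [NormedAddCommGroup E] [InnerProductSpace ℝ E] [CompleteSpace E]
  {D : Set E} {f : E → ℝ} {f' : E → E} {x y v : E} {μ : ℝ}

theorem HasGradientAt.hasDerivAt_comp_lineMap {t : ℝ} (h : HasGradientAt f v (lineMap y x t)) :
    HasDerivAt (f ∘ lineMap y x) ⟪v, x - y⟫ t := by
  simpa [InnerProductSpace.toDual_apply_apply] using
    h.hasFDerivAt.comp_hasDerivAt t (hasDerivAt_lineMap (a := y) (b := x))

theorem ConvexOn.inner_gradient_le_sub (hf : ConvexOn ℝ D f) (hx : x ∈ D) (hy : y ∈ D)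
    (h : HasGradientAt f v y) : ⟪v, x - y⟫ ≤ f x - f y := by
  have hline : ConvexOn ℝ (Icc (0 : ℝ) 1) (f ∘ lineMap y x) :=
    (hf.comp_affineMap _).subset (fun t ht ↦ hf.1.lineMap_mem hy hx ht) (convex_Icc 0 1)
  have h₀ : HasGradientAt f v (lineMap y x (0 : ℝ)) := by rwa [lineMap_apply_zero]
  simpa [slope_def_field] using
    hline.le_slope_of_hasDerivAt (by simp) (by simp) zero_lt_one h₀.hasDerivAt_comp_lineMap

theorem ConvexOn.inner_gradient_sub_nonneg (hf : ConvexOn ℝ D f)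
    (hf' : ∀ x ∈ D, HasGradientAt f (f' x) x) (hx : x ∈ D) (hy : y ∈ D) :
    0 ≤ ⟪f' x - f' y, x - y⟫ := by
  have hxy := hf.inner_gradient_le_sub hx hy (hf' y hy)
  have hyx := hf.inner_gradient_le_sub hy hx (hf' x hx)
  rw [← neg_sub x y, inner_neg_right] at hyx
  rw [inner_sub_left]
  linarith

theorem convexOn_Icc_comp_lineMap_of_inner_gradient_sub_nonneg (hD : Convex ℝ D)
    (hf' : ∀ x ∈ D, HasGradientAt f (f' x) x)
    (hmono : ∀ x ∈ D, ∀ y ∈ D, 0 ≤ ⟪f' x - f' y, x - y⟫) (hx : x ∈ D) (hy : y ∈ D) :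
    ConvexOn ℝ (Icc (0 : ℝ) 1) (f ∘ lineMap y x) := by
  have hderiv : ∀ t ∈ Icc (0 : ℝ) 1,
      HasDerivAt (f ∘ lineMap y x) ⟪f' (lineMap y x t), x - y⟫ t := fun t ht ↦
    (hf' _ (hD.lineMap_mem hy hx ht)).hasDerivAt_comp_lineMap
  refine MonotoneOn.convexOn_of_deriv (convex_Icc 0 1)
    (fun t ht ↦ (hderiv t ht).continuousAt.continuousWithinAt)
    (fun t ht ↦ (hderiv t (interior_subset ht)).differentiableAt.differentiableWithinAt) ?_
  intro s hs r hr hsr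
  rw [(hderiv s (interior_subset hs)).deriv, (hderiv r (interior_subset hr)).deriv,
    ← sub_nonneg, ← inner_sub_left]
  have key := hmono _ (hD.lineMap_mem hy hx (interior_subset hr)) _
    (hD.lineMap_mem hy hx (interior_subset hs))
  have hdiff : lineMap y x r - lineMap y x s = (r - s) • (x - y) := by
    simp only [lineMap_apply_module]; module
  rw [hdiff, inner_smul_right] at key
  rcases hsr.eq_or_lt with rfl | hlt
  · simp
  · exact (mul_nonneg_iff_of_pos_left (sub_pos.2 hlt)).1 key

theorem convexOn_of_inner_gradient_sub_nonneg (hD : Convex ℝ D)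
    (hf' : ∀ x ∈ D, HasGradientAt f (f' x) x)
    (hmono : ∀ x ∈ D, ∀ y ∈ D, 0 ≤ ⟪f' x - f' y, x - y⟫) : ConvexOn ℝ D f := by
  refine ⟨hD, fun x hx y hy a b ha hb hab ↦ ?_⟩
  obtain rfl : a = 1 - b := by linarith
  have := (convexOn_Icc_comp_lineMap_of_inner_gradient_sub_nonneg hD hf' hmono hy hx).2
    (x := 0) (y := 1) (by simp) (by simp) ha hb (by linarith)
  simpa [lineMap_apply_module] using this

theorem convexOn_iff_inner_gradient_sub_nonneg (hD : Convex ℝ D)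
    (hf' : ∀ x ∈ D, HasGradientAt f (f' x) x) :
    ConvexOn ℝ D f ↔ ∀ x ∈ D, ∀ y ∈ D, 0 ≤ ⟪f' x - f' y, x - y⟫ :=
  ⟨fun hf _ hx _ hy ↦ hf.inner_gradient_sub_nonneg hf' hx hy,
    convexOn_of_inner_gradient_sub_nonneg hD hf'⟩

theorem HasGradientAt.sub_half_mul_norm_sq (h : HasGradientAt f v x) (c : ℝ) :
    HasGradientAt (fun x ↦ f x - c / 2 * ‖x‖ ^ 2) (v - c • x) x := by
  rw [hasGradientAt_iff_hasFDerivAt]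
  refine (h.hasFDerivAt.sub
    ((hasStrictFDerivAt_norm_sq x).hasFDerivAt.const_mul (c / 2))).congr_fderiv ?_
  ext w
  simp [InnerProductSpace.toDual_apply_apply]
  ring

theorem strongConvexOn_iff_inner_gradient_sub_ge (hD : Convex ℝ D)
    (hf' : ∀ x ∈ D, HasGradientAt f (f' x) x) :
    StrongConvexOn D μ f ↔ ∀ x ∈ D, ∀ y ∈ D, μ * ‖x - y‖ ^ 2 ≤ ⟪f' x - f' y, x - y⟫ := by
  have hg' : ∀ x ∈ D, HasGradientAt (fun x ↦ f x - μ / 2 * ‖x‖ ^ 2) (f' x - μ • x) x :=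
    fun x hx ↦ (hf' x hx).sub_half_mul_norm_sq μ
  rw [strongConvexOn_iff_convex, convexOn_iff_inner_gradient_sub_nonneg hD hg']
  refine forall₂_congr fun x _ ↦ forall₂_congr fun y _ ↦ ?_
  have hsplit : f' x - μ • x - (f' y - μ • y) = (f' x - f' y) - μ • (x - y) := by module
  rw [hsplit, inner_sub_left, real_inner_smul_left, real_inner_self_eq_norm_sq, sub_nonneg]

end InnerProductSpace

theorem stmt_8_general {n : ℕ} (D : Set (EuclideanSpace ℝ (Fin n))) (hD : Convex ℝ D)
    (f : EuclideanSpace ℝ (Fin n) → ℝ) (f' : EuclideanSpace ℝ (Fin n) → EuclideanSpace ℝ (Fin n))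
    (hf : ∀ x ∈ D, HasGradientAt f (f' x) x) (μ : ℝ) :
    (∀ x ∈ D, ∀ y ∈ D, ∀ t ∈ Set.Icc (0:ℝ) 1,
        f (t • x + (1 - t) • y)
          ≤ t * f x + (1 - t) * f y - μ / 2 * t * (1 - t) * ‖x - y‖ ^ 2)
      ↔ (∀ x ∈ D, ∀ y ∈ D, ⟪f' x - f' y, x - y⟫ ≥ μ * ‖x - y‖ ^ 2) := by
  rw [← strongConvexOn_iff_forall_Icc hD]
  exact strongConvexOn_iff_inner_gradient_sub_ge hD hf

theorem stmt_8 {n : ℕ} (D : Set (EuclideanSpace ℝ (Fin n))) (hD : Convex ℝ D)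
    (f : EuclideanSpace ℝ (Fin n) → ℝ) (f' : EuclideanSpace ℝ (Fin n) → EuclideanSpace ℝ (Fin n))
    (hf : ∀ x ∈ D, HasGradientAt f (f' x) x) (μ : ℝ) (hμ : 0 < μ) :
    (∀ x ∈ D, ∀ y ∈ D, ∀ t ∈ Set.Icc (0:ℝ) 1,
        f (t • x + (1 - t) • y)
          ≤ t * f x + (1 - t) * f y - μ / 2 * t * (1 - t) * ‖x - y‖ ^ 2)
      ↔ (∀ x ∈ D, ∀ y ∈ D, ⟪f' x - f' y, x - y⟫ ≥ μ * ‖x - y‖ ^ 2) :=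
  stmt_8_general D hD f f' hf μ
end
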